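/- arXiv:2201.09718 — 2 statements merged into one kernel-verified Lean document; each statement's English description precedes it below -/
import Mathlib

section
/- In the case k = 3, j = 2: if a 2-configuration A_0 is contagious on K_n^3 with infection threshold r (n ≥ 2r+1), then |A_0| ≥ (1/4)((r+1)^2 − 1_{r even}), where 1_{r even} is 1 if r is even and 0 otherwise. -/
open Finset

open Classical in
noncomputable def bootStep (V : Finset ℕ) (E : Finset (Finset ℕ)) (j r : ℕ)
    (A : Finset (Finset ℕ)) : Finset (Finset ℕ) :=
  A ∪ (V.powersetCard j).filter (fun J =>
    ∃ K : Fin r → Finset ℕ, ∃ Js : Fin r → Finset ℕ,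
      Function.Injective K ∧ Function.Injective Js ∧
      ∀ i : Fin r, K i ∈ E ∧ Js i ∈ A ∧ Js i ∪ J ⊆ K i)

/-- The infected sets at time `t` of the bootstrap percolation process on a hypergraph
with vertex set `V`, edge set `E`, evolving on `j`-sets with infection threshold `r`. -/
noncomputable def bootProc (V : Finset ℕ) (E : Finset (Finset ℕ)) (j r : ℕ)
    (A0 : Finset (Finset ℕ)) (t : ℕ) : Finset (Finset ℕ) :=
  (bootStep V E j r)^[t] A0

/-- The process on the complete `k`-uniform hypergraph on `V`. -/
noncomputable def compProc (V : Finset ℕ) (k j r : ℕ)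
    (A0 : Finset (Finset ℕ)) (t : ℕ) : Finset (Finset ℕ) :=
  bootProc V (V.powersetCard k) j r A0 t

/-- `A0` is contagious: eventually all `j`-sets of `V` are infected. -/
def Percolates (V : Finset ℕ) (k j r : ℕ) (A0 : Finset (Finset ℕ)) : Prop :=
  ∃ t, compProc V k j r A0 t = V.powersetCard j

/-- `ℓ_n(k,j,r)`: minimum size of a contagious `j`-configuration in `K_n^k`. -/
noncomputable def ellMin (n k j r : ℕ) : ℕ :=
  sInf {m | ∃ A0 : Finset (Finset ℕ), A0 ⊆ (range n).powersetCard j ∧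
    A0.card = m ∧ Percolates (range n) k j r A0}

open Classical in
/-- The extension set of a `(k-1)`-set `J` with respect to configuration `C` in the
complete `k`-uniform hypergraph on `V`. -/
noncomputable def extSet (V : Finset ℕ) (k : ℕ) (C : Finset (Finset ℕ))
    (J : Finset ℕ) : Finset ℕ :=
  V.filter (fun v => ∃ J' ∈ C, J' ≠ J ∧ J' ⊆ insert v J ∧ insert v J ∈ V.powersetCard k)

/-!
Remove the two vertices of a pair `J` infected in the first round. Every infected pair disjoint
from `J` is still infected when the threshold drops by two and the process runs on the remaining
vertices, because at most two of the triples witnessing an infection can meet `J`. So the pairs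
of `A0` avoiding `J` are contagious for threshold `r - 2`, while at least `r` pairs of `A0` meet
`J`. Since `(r + 1) ^ 2 - (r - 1) ^ 2 = 4 * r`, induction on `r` in steps of two gives the bound.
-/

/-- Four times the paper's lower bound `((r + 1) ^ 2 - 1_{r even}) / 4` for `ℓ_n(3, 2, r)`. -/
def pairLowerBound (r : ℕ) : ℕ :=
  (r + 1) ^ 2 - if Even r then 1 else 0

lemma pairLowerBound_le (r : ℕ) : pairLowerBound r ≤ pairLowerBound (r - 2) + 4 * r := by
  rcases r with _ | _ | m
  · simp [pairLowerBound]
  · simp [pairLowerBound]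
  · show pairLowerBound (m + 2) ≤ pairLowerBound m + 4 * (m + 2)
    have hsq : (m + 2 + 1) ^ 2 = (m + 1) ^ 2 + 4 * (m + 2) := by ring
    have hpos : 1 ≤ (m + 1) ^ 2 := Nat.one_le_pow _ _ m.succ_pos
    have heven : Even (m + 2) ↔ Even m := Nat.even_add.trans (by simp)
    simp only [pairLowerBound, hsq, if_congr heven rfl rfl]
    split_ifs <;> omega

lemma pairLowerBound_le_four_mul_choose_two {r n : ℕ} (hn : 2 * r + 1 ≤ n) :
    pairLowerBound r ≤ 4 * n.choose 2 := by
  have hchoose : (2 * r + 1).choose 2 = (2 * r + 1) * r := by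
    rw [Nat.choose_two_right, Nat.add_sub_cancel, mul_left_comm, Nat.mul_div_cancel_left _ two_pos]
  calc pairLowerBound r ≤ 4 * ((2 * r + 1) * r) := by
        rcases r with _ | r
        · simp [pairLowerBound]
        · exact (Nat.sub_le _ _).trans (by nlinarith)
    _ ≤ 4 * n.choose 2 := by rw [← hchoose]; exact Nat.mul_le_mul_left 4 (Nat.choose_le_choose 2 hn)

lemma Finset.mem_image_insert_of_not_subset_sdiff {α : Type*} [DecidableEq α]
    {V W J K : Finset α} (hJ : J ⊆ V \ W) (hK : K ∈ V.powersetCard (J.card + 1)) (hJK : J ⊆ K)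
    (hKW : ¬ K ⊆ V \ W) : K ∈ W.image (insert · J) := by
  obtain ⟨hKV, hKcard⟩ := mem_powersetCard.1 hK
  obtain ⟨x, hxK, hxVW⟩ := not_subset.1 hKW
  have hxW : x ∈ W := by_contra fun hxW => hxVW (mem_sdiff.2 ⟨hKV hxK, hxW⟩)
  have hxJ : x ∉ J := fun hxJ => (mem_sdiff.1 (hJ hxJ)).2 hxW
  refine mem_image.2 ⟨x, hxW, eq_of_subset_of_card_le (insert_subset hxK hJK) ?_⟩
  rw [card_insert_of_notMem hxJ, hKcard]

lemma exists_injective_fin_mem {r m : ℕ} {S : Finset (Fin r)} (h : m ≤ S.card) :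
    ∃ e : Fin m → Fin r, Function.Injective e ∧ ∀ i, e i ∈ S := by
  obtain ⟨T, hTS, hT⟩ := exists_subset_card_eq h
  exact ⟨fun i => T.orderIsoOfFin hT i, Subtype.val_injective.comp (OrderIso.injective _),
    fun i => hTS (T.orderIsoOfFin hT i).2⟩

def IsInfectable (E : Finset (Finset ℕ)) (r : ℕ) (A : Finset (Finset ℕ)) (J : Finset ℕ) : Prop :=
  ∃ K Js : Fin r → Finset ℕ, Function.Injective K ∧ Function.Injective Js ∧
    ∀ i, K i ∈ E ∧ Js i ∈ A ∧ Js i ∪ J ⊆ K i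

lemma mem_bootStep {V : Finset ℕ} {E : Finset (Finset ℕ)} {j r : ℕ} {A : Finset (Finset ℕ)}
    {J : Finset ℕ} :
    J ∈ bootStep V E j r A ↔ J ∈ A ∨ J ∈ V.powersetCard j ∧ IsInfectable E r A J := by
  simp only [bootStep, mem_union, mem_filter]
  rfl

lemma IsInfectable.mono {E : Finset (Finset ℕ)} {r : ℕ} {A B : Finset (Finset ℕ)} {J : Finset ℕ}
    (h : IsInfectable E r A J) (hAB : A ⊆ B) : IsInfectable E r B J := by
  obtain ⟨K, Js, hK, hJs, hKJs⟩ := h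
  exact ⟨K, Js, hK, hJs, fun i => ⟨(hKJs i).1, hAB (hKJs i).2.1, (hKJs i).2.2⟩⟩

/-- An edge through `J` that leaves `V \ W` is `insert x J` with `x ∈ W`, so deleting `W` costs at
most `#W` witnesses. -/
lemma IsInfectable.restrict {V W J : Finset ℕ} {r : ℕ} {A : Finset (Finset ℕ)}
    (h : IsInfectable (V.powersetCard (J.card + 1)) r A J) (hJ : J ⊆ V \ W) :
    IsInfectable ((V \ W).powersetCard (J.card + 1)) (r - W.card)
      (A.filter (· ⊆ V \ W)) J := by
  obtain ⟨K, Js, hK, hJs, hKJs⟩ := h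
  have hbad : (univ.filter fun i => ¬ K i ⊆ V \ W).card ≤ W.card := by
    refine (card_le_card_of_injOn (t := W.image (insert · J)) K (fun i hi => ?_) hK.injOn).trans
      card_image_le
    exact mem_image_insert_of_not_subset_sdiff hJ (hKJs i).1
      (subset_union_right.trans (hKJs i).2.2) (mem_filter.1 hi).2
  have hgood : r - W.card ≤ (univ.filter fun i => K i ⊆ V \ W).card := by
    have hsplit := card_filter_add_card_filter_not (s := univ) (fun i => K i ⊆ V \ W)
    rw [card_univ, Fintype.card_fin] at hsplit
    omega
  obtain ⟨e, he, heGood⟩ := exists_injective_fin_mem hgood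
  refine ⟨K ∘ e, Js ∘ e, hK.comp he, hJs.comp he, fun i => ?_⟩
  have hKW := (mem_filter.1 (heGood i)).2
  obtain ⟨hKE, hJsA, hJsK⟩ := hKJs (e i)
  exact ⟨mem_powersetCard.2 ⟨hKW, (mem_powersetCard.1 hKE).2⟩,
    mem_filter.2 ⟨hJsA, (subset_union_left.trans hJsK).trans hKW⟩, hJsK⟩

lemma compProc_succ (V : Finset ℕ) (k j r : ℕ) (A0 : Finset (Finset ℕ)) (t : ℕ) :
    compProc V k j r A0 (t + 1) = bootStep V (V.powersetCard k) j r (compProc V k j r A0 t) :=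
  Function.iterate_succ_apply' _ _ _

lemma compProc_subset_powersetCard {V : Finset ℕ} {k j r : ℕ} {A0 : Finset (Finset ℕ)}
    (hA0 : A0 ⊆ V.powersetCard j) (t : ℕ) : compProc V k j r A0 t ⊆ V.powersetCard j := by
  induction t with
  | zero => exact hA0
  | succ t ih =>
    intro J hJ
    rw [compProc_succ, mem_bootStep] at hJ
    exact hJ.elim (fun h => ih h) And.left

lemma filter_compProc_subset_compProc_sdiff (V W : Finset ℕ) (j r : ℕ)
    (A0 : Finset (Finset ℕ)) (t : ℕ) :
    (compProc V (j + 1) j r A0 t).filter (· ⊆ V \ W) ⊆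
      compProc (V \ W) (j + 1) j (r - W.card) (A0.filter (· ⊆ V \ W)) t := by
  induction t with
  | zero => exact Subset.rfl
  | succ t ih =>
    intro J hJ
    obtain ⟨hJt, hJW⟩ := mem_filter.1 hJ
    rw [compProc_succ, mem_bootStep] at hJt ⊢
    rcases hJt with hJt | ⟨hJV, hinf⟩
    · exact Or.inl (ih (mem_filter.2 ⟨hJt, hJW⟩))
    · have hJcard := (mem_powersetCard.1 hJV).2
      subst hJcard
      exact Or.inr ⟨mem_powersetCard.2 ⟨hJW, rfl⟩, (hinf.restrict hJW).mono ih⟩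

lemma filter_subset_sdiff_subset_powersetCard {V W : Finset ℕ} {j : ℕ} {A : Finset (Finset ℕ)}
    (hA : A ⊆ V.powersetCard j) : A.filter (· ⊆ V \ W) ⊆ (V \ W).powersetCard j := fun _ hs =>
  mem_powersetCard.2 ⟨(mem_filter.1 hs).2, (mem_powersetCard.1 (hA (mem_filter.1 hs).1)).2⟩

lemma Percolates.restrict {V W : Finset ℕ} {j r : ℕ} {A0 : Finset (Finset ℕ)}
    (h : Percolates V (j + 1) j r A0) (hA0 : A0 ⊆ V.powersetCard j) :
    Percolates (V \ W) (j + 1) j (r - W.card) (A0.filter (· ⊆ V \ W)) := by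
  obtain ⟨t, ht⟩ := h
  refine ⟨t, (compProc_subset_powersetCard (filter_subset_sdiff_subset_powersetCard hA0) t)
    |>.antisymm fun J hJ => ?_⟩
  obtain ⟨hJVW, hJcard⟩ := mem_powersetCard.1 hJ
  refine filter_compProc_subset_compProc_sdiff V W j r A0 t (mem_filter.2 ⟨?_, hJVW⟩)
  exact ht ▸ mem_powersetCard.2 ⟨hJVW.trans sdiff_subset, hJcard⟩

lemma Percolates.exists_isInfectable {V : Finset ℕ} {k j r : ℕ} {A0 : Finset (Finset ℕ)}
    (h : Percolates V k j r A0) (hA0 : A0 ≠ V.powersetCard j) :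
    ∃ J ∈ V.powersetCard j, IsInfectable (V.powersetCard k) r A0 J := by
  by_contra! hnone
  have hfixed : bootStep V (V.powersetCard k) j r A0 = A0 := by
    refine Subset.antisymm (fun J hJ => ?_) fun J hJ => mem_bootStep.2 (Or.inl hJ)
    exact (mem_bootStep.1 hJ).resolve_right fun hinf => hnone J hinf.1 hinf.2
  obtain ⟨t, ht⟩ := h
  exact hA0 (Function.iterate_fixed hfixed t ▸ ht)

lemma IsInfectable.le_card_filter_not_subset_sdiff {V J : Finset ℕ} {r : ℕ}
    {A : Finset (Finset ℕ)} (h : IsInfectable (V.powersetCard 3) r A J)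
    (hA : A ⊆ V.powersetCard 2) (hJ : J.card = 2) :
    r ≤ (A.filter fun s => ¬ s ⊆ V \ J).card := by
  obtain ⟨K, Js, -, hJs, hKJs⟩ := h
  have hmeet : ∀ i, ¬ Disjoint (Js i) J := fun i hdisj => by
    obtain ⟨hKE, hJsA, hJsK⟩ := hKJs i
    have := card_le_card hJsK
    rw [card_union_of_disjoint hdisj, hJ, (mem_powersetCard.1 (hA hJsA)).2,
      (mem_powersetCard.1 hKE).2] at this
    omega
  calc r = (univ.image Js).card := by
        rw [card_image_of_injective _ hJs, card_univ, Fintype.card_fin]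
    _ ≤ _ := card_le_card fun s hs => by
      obtain ⟨i, -, rfl⟩ := mem_image.1 hs
      exact mem_filter.2 ⟨(hKJs i).2.1, fun hsub => hmeet i (subset_sdiff.1 hsub).2⟩

theorem pairLowerBound_le_four_mul_card (r : ℕ) {V : Finset ℕ} {A0 : Finset (Finset ℕ)}
    (hV : 2 * r + 1 ≤ V.card) (hA0 : A0 ⊆ V.powersetCard 2) (h : Percolates V 3 2 r A0) :
    pairLowerBound r ≤ 4 * A0.card := by
  induction r using Nat.strong_induction_on generalizing V A0 with
  | _ r ih =>
  rcases Nat.eq_zero_or_pos r with rfl | hr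
  · simp [pairLowerBound]
  by_cases hfull : A0 = V.powersetCard 2
  · rw [hfull, card_powersetCard]
    exact pairLowerBound_le_four_mul_choose_two hV
  obtain ⟨J, hJ, hinf⟩ := h.exists_isInfectable hfull
  obtain ⟨hJV, hJcard⟩ := mem_powersetCard.1 hJ
  have hmeet := hinf.le_card_filter_not_subset_sdiff hA0 hJcard
  have hsplit := card_filter_add_card_filter_not (s := A0) (· ⊆ V \ J)
  have hrest := h.restrict (W := J) hA0
  rw [hJcard] at hrest
  have hVJ : 2 * (r - 2) + 1 ≤ (V \ J).card := by
    rw [card_sdiff_of_subset hJV, hJcard]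
    omega
  have hIH := ih (r - 2) (by omega) hVJ (filter_subset_sdiff_subset_powersetCard hA0) hrest
  calc pairLowerBound r ≤ pairLowerBound (r - 2) + 4 * r := pairLowerBound_le r
    _ ≤ 4 * A0.card := by omega

theorem stmt9_general (n r : ℕ) (hn : 2 * r + 1 ≤ n)
    (A0 : Finset (Finset ℕ)) (hA0 : A0 ⊆ (range n).powersetCard 2)
    (hperc : Percolates (range n) 3 2 r A0) :
    (r + 1) ^ 2 - (if Even r then 1 else 0) ≤ 4 * A0.card :=
  pairLowerBound_le_four_mul_card r (by rwa [card_range]) hA0 hperc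

theorem stmt9 (n r : ℕ) (hr : 1 ≤ r) (hn : 2 * r + 1 ≤ n)
    (A0 : Finset (Finset ℕ)) (hA0 : A0 ⊆ (range n).powersetCard 2)
    (hperc : Percolates (range n) 3 2 r A0) :
    (r + 1) ^ 2 - (if Even r then 1 else 0) ≤ 4 * A0.card :=
  stmt9_general n r hn A0 hA0 hperc
end

section
/- Let 3 ≤ j = k−1. For each s ∈ [r] let B_s be an (n−r; j−1, s)-configuration, all on a common vertex set disjoint from R = {v_1,…,v_r}. Then the j-configuration A := ⋃_{s∈[r]} (B_s)_{v_s} is contagious with infection threshold r in K_n^k (n large enough). Consequently ℓ_n(k, k−1, r) ≤ Σ_{i=1}^{r} ℓ_n(k−1, k−2, i). -/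
open Finset

/-!
Write `W` for the vertices outside `R = {v 0, …, v (r-1)}`. By downward induction on `i`, every
`(k-1)`-set `insert (v i) J` with `J ⊆ W` gets infected: the threshold-`(i+1)` process from
`B i`, lifted through `v i`, supplies `i + 1` infected neighbours, and the completed stages of
the `v i'` with `i' > i` supply the other `r - (i+1)` through the edges
`insert (v i') (insert (v i) J)`. Any other `(k-1)`-set is then reached by trading its vertices
in `R` one at a time for fresh vertices of `W` (or, if it misses `R`, one of its vertices for the
`v i`).

For the bound on `ℓ_n`: a contagious set on `m` vertices stays contagious when a vertex is
added, so `ℓ_m(k-1, k-2, s)` is non-increasing, hence eventually constant, in `m`; thus optimal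
`B i` on the `n - r` vertices outside `R` have size `ℓ_n(k-1, k-2, i+1)`.
-/

open Finset Filter Function

theorem Finset.insert_mem_powersetCard {α : Type*} [DecidableEq α] {V S : Finset α} {m : ℕ}
    {x : α} (hx : x ∈ V) (hxS : x ∉ S) (hS : S ∈ V.powersetCard m) :
    insert x S ∈ V.powersetCard (m + 1) := by
  obtain ⟨hSV, hScard⟩ := mem_powersetCard.1 hS
  exact mem_powersetCard.2 ⟨insert_subset hx hSV, by rw [card_insert_of_notMem hxS, hScard]⟩

theorem Finset.exists_injective_fin_of_le_card {α : Type*} [LinearOrder α] {s : Finset α}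
    {r : ℕ} (h : r ≤ s.card) : ∃ w : Fin r → α, Injective w ∧ ∀ l, w l ∈ s :=
  ⟨fun l => s.orderEmbOfFin rfl (Fin.castLE h l),
    (s.orderEmbOfFin rfl).injective.comp (Fin.castLE_injective h),
    fun _ => s.orderEmbOfFin_mem rfl _⟩

theorem Finset.injective_insert_comp {α ι : Type*} [DecidableEq α] {a : α}
    {K : ι → Finset α} (hK : Injective K) (ha : ∀ i, a ∉ K i) :
    Injective fun i => insert a (K i) :=
  fun x y hxy => hK ((erase_insert (ha x)).symm.trans
    ((congrArg (·.erase a) hxy).trans (erase_insert (ha y))))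

section Dynamics

variable {V V' : Finset ℕ} {E E' : Finset (Finset ℕ)} {j r : ℕ} {A0 A0' : Finset (Finset ℕ)}

theorem bootStep_mono {A A' : Finset (Finset ℕ)} (hV : V ⊆ V') (hE : E ⊆ E') (hA : A ⊆ A') :
    bootStep V E j r A ⊆ bootStep V' E' j r A' := by
  classical
  intro J hJ
  rcases mem_union.1 hJ with hJA | hJ
  · exact mem_union_left _ (hA hJA)
  · obtain ⟨hJV, K, Js, hK, hJs, h⟩ := mem_filter.1 hJ
    exact mem_union_right _ (mem_filter.2 ⟨powersetCard_mono hV hJV, K, Js, hK, hJs,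
      fun i => ⟨hE (h i).1, hA (h i).2.1, (h i).2.2⟩⟩)

theorem bootProc_succ (t : ℕ) :
    bootProc V E j r A0 (t + 1) = bootStep V E j r (bootProc V E j r A0 t) :=
  iterate_succ_apply' _ _ _

theorem bootProc_monotone : Monotone (bootProc V E j r A0) :=
  monotone_nat_of_le_succ fun t => by rw [bootProc_succ]; exact subset_union_left

theorem bootProc_mono (hV : V ⊆ V') (hE : E ⊆ E') (hA : A0 ⊆ A0') (t : ℕ) :
    bootProc V E j r A0 t ⊆ bootProc V' E' j r A0' t := by
  induction t with
  | zero => exact hA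
  | succ t ih => rw [bootProc_succ, bootProc_succ]; exact bootStep_mono hV hE ih

theorem bootProc_subset_powersetCard (hA0 : A0 ⊆ V.powersetCard j) (t : ℕ) :
    bootProc V E j r A0 t ⊆ V.powersetCard j := by
  classical
  induction t with
  | zero => exact hA0
  | succ t ih => rw [bootProc_succ]; exact union_subset ih (filter_subset _ _)

def IsInfected (V : Finset ℕ) (E : Finset (Finset ℕ)) (j r : ℕ) (A0 : Finset (Finset ℕ))
    (J : Finset ℕ) : Prop :=
  ∃ t, J ∈ bootProc V E j r A0 t

theorem IsInfected.eventually {J : Finset ℕ} (h : IsInfected V E j r A0 J) :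
    ∀ᶠ t in atTop, J ∈ bootProc V E j r A0 t :=
  let ⟨t, ht⟩ := h
  eventually_atTop.2 ⟨t, fun _ hs => bootProc_monotone hs ht⟩

theorem IsInfected.of_witnesses {J : Finset ℕ} (hJ : J ∈ V.powersetCard j)
    (K Js : Fin r → Finset ℕ) (hK : Injective K) (hJs : Injective Js)
    (h : ∀ i, K i ∈ E ∧ IsInfected V E j r A0 (Js i) ∧ Js i ∪ J ⊆ K i) :
    IsInfected V E j r A0 J := by
  classical
  obtain ⟨t, ht⟩ := (eventually_all.2 fun i => (h i).2.1.eventually).exists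
  refine ⟨t + 1, ?_⟩
  rw [bootProc_succ]
  exact mem_union_right _
    (mem_filter.2 ⟨hJ, K, Js, hK, hJs, fun i => ⟨(h i).1, ht i, (h i).2.2⟩⟩)

theorem IsInfected.of_insert_erase {J : Finset ℕ} (hJ : J ∈ V.powersetCard j) (x : ℕ)
    {w : Fin r → ℕ} (hw : Injective w) (hwV : ∀ l, w l ∈ V \ J)
    (h : ∀ l, IsInfected V (V.powersetCard (j + 1)) j r A0 (insert (w l) (J.erase x))) :
    IsInfected V (V.powersetCard (j + 1)) j r A0 J := by
  have hwJ l : w l ∉ J := (mem_sdiff.1 (hwV l)).2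
  refine .of_witnesses hJ (fun l => insert (w l) J) (fun l => insert (w l) (J.erase x))
    (fun a b hab => hw ((insert_inj (hwJ a)).1 hab))
    (fun a b hab => hw ((insert_inj fun h => hwJ a (erase_subset _ _ h)).1 hab))
    fun l => ⟨insert_mem_powersetCard (mem_sdiff.1 (hwV l)).1 (hwJ l) hJ, h l, ?_⟩
  exact union_subset (insert_subset_insert _ (erase_subset _ _)) (subset_insert _ _)

theorem Percolates.subset_powersetCard {k : ℕ} (h : Percolates V k j r A0) :
    A0 ⊆ V.powersetCard j :=
  let ⟨t, ht⟩ := h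
  ht ▸ bootProc_monotone (Nat.zero_le t)

theorem Percolates.isInfected {k : ℕ} {J : Finset ℕ} (h : Percolates V k j r A0)
    (hJ : J ∈ V.powersetCard j) : IsInfected V (V.powersetCard k) j r A0 J := by
  obtain ⟨t, ht⟩ := h
  unfold compProc at ht
  exact ⟨t, ht ▸ hJ⟩

theorem percolates_of_forall_isInfected {k : ℕ} (hA0 : A0 ⊆ V.powersetCard j)
    (h : ∀ J ∈ V.powersetCard j, IsInfected V (V.powersetCard k) j r A0 J) :
    Percolates V k j r A0 := by
  obtain ⟨t, ht⟩ := ((eventually_all_finset _).2 fun J hJ => (h J hJ).eventually).exists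
  exact ⟨t, (bootProc_subset_powersetCard hA0 t).antisymm ht⟩

end Dynamics

/-- A `j`-set through the new vertex `a` is infected by trading `a` for `s` vertices of `V`. -/
theorem Percolates.insert_of_notMem {V : Finset ℕ} {j s a : ℕ} {A0 : Finset (Finset ℕ)}
    (h : Percolates V (j + 1) j s A0) (ha : a ∉ V) (hj : 1 ≤ j) (hV : j - 1 + s ≤ V.card) :
    Percolates (insert a V) (j + 1) j s A0 := by
  have hVa : V ⊆ insert a V := subset_insert _ _
  have old : ∀ J ∈ V.powersetCard j,
      IsInfected (insert a V) ((insert a V).powersetCard (j + 1)) j s A0 J := fun J hJ =>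
    let ⟨t, ht⟩ := h.isInfected hJ
    ⟨t, bootProc_mono hVa (powersetCard_mono hVa) subset_rfl t ht⟩
  refine percolates_of_forall_isInfected
    (h.subset_powersetCard.trans (powersetCard_mono hVa)) fun J hJ => ?_
  obtain ⟨hJV, hJcard⟩ := mem_powersetCard.1 hJ
  by_cases haJ : a ∈ J
  · have hJa : J.erase a ∈ V.powersetCard (j - 1) :=
      mem_powersetCard.2 ⟨subset_insert_iff.1 hJV, by rw [card_erase_of_mem haJ, hJcard]⟩
    obtain ⟨w, hw, hwV⟩ := exists_injective_fin_of_le_card (s := V \ J.erase a) (r := s) (by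
      have := le_card_sdiff (J.erase a) V
      have := card_erase_of_mem haJ
      omega)
    have hwV' l : w l ∈ V ∧ w l ∉ J.erase a := Finset.mem_sdiff.1 (hwV l)
    have hwJ l : w l ∉ J := fun hwJ =>
      (hwV' l).2 (mem_erase.2 ⟨fun hwa => ha (hwa ▸ (hwV' l).1), hwJ⟩)
    refine .of_insert_erase hJ a hw (fun l => mem_sdiff.2 ⟨hVa (hwV' l).1, hwJ l⟩)
      fun l => old _ ?_
    have := insert_mem_powersetCard (hwV' l).1 (hwV' l).2 hJa
    rwa [Nat.sub_add_cancel hj] at this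
  · exact old J (mem_powersetCard.2 ⟨(subset_insert_iff_of_notMem haJ).1 hJV, hJcard⟩)

theorem exists_percolates_card_eq_ellMin (m k j r : ℕ) :
    ∃ A0, A0.card = ellMin m k j r ∧ Percolates (range m) k j r A0 :=
  let ⟨A0, _, hcard, hA0⟩ := Nat.sInf_mem (s := {m' | ∃ A0,
    A0 ⊆ (range m).powersetCard j ∧ A0.card = m' ∧ Percolates (range m) k j r A0})
    ⟨_, _, subset_rfl, rfl, 0, rfl⟩
  ⟨A0, hcard, hA0⟩

theorem ellMin_le_card {m k j r : ℕ} {A0 : Finset (Finset ℕ)}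
    (h : Percolates (range m) k j r A0) : ellMin m k j r ≤ A0.card :=
  Nat.sInf_le ⟨A0, h.subset_powersetCard, rfl, h⟩

theorem ellMin_succ_le {m j s : ℕ} (hj : 1 ≤ j) (hm : j - 1 + s ≤ m) :
    ellMin (m + 1) (j + 1) j s ≤ ellMin m (j + 1) j s := by
  obtain ⟨A0, hcard, hA0⟩ := exists_percolates_card_eq_ellMin m (j + 1) j s
  have := hA0.insert_of_notMem notMem_range_self hj (by rwa [card_range])
  rw [← range_add_one] at this
  exact hcard ▸ ellMin_le_card this

theorem exists_eventually_ellMin_eq {j : ℕ} (hj : 1 ≤ j) (s : ℕ) :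
    ∃ L, ∀ᶠ m in atTop, ellMin m (j + 1) j s = L := by
  obtain ⟨N, hN⟩ := WellFoundedLT.antitone_chain_condition
    (f := fun m => ellMin (j - 1 + s + m) (j + 1) j s)
    (antitone_nat_of_succ_le fun _ => ellMin_succ_le hj (Nat.le_add_right _ _))
  refine ⟨ellMin (j - 1 + s + N) (j + 1) j s,
    eventually_atTop.2 ⟨j - 1 + s + N, fun m hm => ?_⟩⟩
  have := hN (m - (j - 1 + s)) (by omega)
  rwa [Nat.add_sub_cancel' (by omega), eq_comm] at this

section Lift

variable {V W : Finset ℕ} {j s e r a : ℕ} {A0 : Finset (Finset ℕ)} {u : Fin e → ℕ}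

/-- The `s` infecting pairs of a round on `W` lift through `a`; the `e` missing ones are
`insert (u l) J ⊆ insert (u l) (insert a J)`. -/
theorem isInfected_insert_of_mem_bootStep {A : Finset (Finset ℕ)} {J : Finset ℕ}
    (hse : s + e = r) (hWV : insert a W ⊆ V) (ha : a ∉ W) (hu : Injective u)
    (huV : ∀ l, u l ∈ V \ insert a W)
    (hA : ∀ J ∈ A, IsInfected V (V.powersetCard (j + 2)) (j + 1) r A0 (insert a J))
    (hfresh : ∀ l, ∀ J ∈ W.powersetCard j,
      IsInfected V (V.powersetCard (j + 2)) (j + 1) r A0 (insert (u l) J))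
    (hJ : J ∈ bootStep W (W.powersetCard (j + 1)) j s A) :
    IsInfected V (V.powersetCard (j + 2)) (j + 1) r A0 (insert a J) := by
  classical
  subst hse
  rcases mem_union.1 hJ with hJA | hJ
  · exact hA J hJA
  obtain ⟨hJW, K, Js, hK, hJs, h⟩ := mem_filter.1 hJ
  have hWV' : W ⊆ V := (subset_insert a W).trans hWV
  have haV : a ∈ V := hWV (mem_insert_self a W)
  have hKW l : K l ⊆ W := (mem_powersetCard.1 (h l).1).1
  have hJsW l : Js l ⊆ W := subset_union_left.trans ((h l).2.2.trans (hKW l))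
  have hJW' : J ⊆ W := (mem_powersetCard.1 hJW).1
  have huW l : u l ∉ insert a W := (Finset.mem_sdiff.1 (huV l)).2
  have huJ l : u l ∉ insert a J := fun h => huW l (insert_subset_insert a hJW' h)
  have haJ : insert a J ∈ V.powersetCard (j + 1) :=
    insert_mem_powersetCard haV (fun h => ha (hJW' h)) (powersetCard_mono hWV' hJW)
  -- The lifted sets lie in `insert a W`, the fresh ones contain some `u l ∉ insert a W`.
  have hK' : Injective
      (Fin.append (fun l => insert a (K l)) fun l => insert (u l) (insert a J)) :=
    Fin.append_injective_iff.2 ⟨injective_insert_comp hK fun l h => ha (hKW l h),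
      fun x y hxy => hu ((insert_inj (huJ x)).1 hxy),
      fun x y hxy => huW y (insert_subset_insert a (hKW x) (hxy ▸ mem_insert_self _ _))⟩
  have hJs' : Injective (Fin.append (fun l => insert a (Js l)) fun l => insert (u l) J) :=
    Fin.append_injective_iff.2 ⟨injective_insert_comp hJs fun l h => ha (hJsW l h),
      fun x y hxy => hu ((insert_inj fun h => huJ x (mem_insert_of_mem h)).1 hxy),
      fun x y hxy => huW y (insert_subset_insert a (hJsW x) (hxy ▸ mem_insert_self _ _))⟩
  refine .of_witnesses haJ _ _ hK' hJs' fun l => Fin.addCases (fun l => ?_) (fun l => ?_) l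
  · simp only [Fin.append_left]
    refine ⟨insert_mem_powersetCard haV (fun h' => ha (hKW l h'))
      (powersetCard_mono hWV' (h l).1), hA _ (h l).2.1, ?_⟩
    rw [← insert_union_distrib]
    exact insert_subset_insert a (h l).2.2
  · simp only [Fin.append_right]
    exact ⟨insert_mem_powersetCard (Finset.mem_sdiff.1 (huV l)).1 (huJ l) haJ, hfresh l J hJW,
      union_subset (insert_subset_insert _ (subset_insert a J)) (subset_insert _ _)⟩

theorem isInfected_insert_of_percolates {B : Finset (Finset ℕ)} {J : Finset ℕ}
    (hse : s + e = r) (hWV : insert a W ⊆ V) (ha : a ∉ W) (hu : Injective u)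
    (huV : ∀ l, u l ∈ V \ insert a W)
    (hB : ∀ J ∈ B, IsInfected V (V.powersetCard (j + 2)) (j + 1) r A0 (insert a J))
    (hfresh : ∀ l, ∀ J ∈ W.powersetCard j,
      IsInfected V (V.powersetCard (j + 2)) (j + 1) r A0 (insert (u l) J))
    (hperc : Percolates W (j + 1) j s B) (hJ : J ∈ W.powersetCard j) :
    IsInfected V (V.powersetCard (j + 2)) (j + 1) r A0 (insert a J) := by
  obtain ⟨t, ht⟩ := hperc.isInfected hJ
  suffices ∀ t, ∀ J ∈ bootProc W (W.powersetCard (j + 1)) j s B t,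
      IsInfected V (V.powersetCard (j + 2)) (j + 1) r A0 (insert a J) from
    this t J ht
  intro t
  induction t with
  | zero => exact hB
  | succ t ih =>
    intro J hJ
    rw [bootProc_succ] at hJ
    exact isInfected_insert_of_mem_bootStep hse hWV ha hu huV ih hfresh hJ

end Lift

/-- The configuration `⋃ᵢ (B i)_{v i}` of the paper. -/
def liftUnion {r : ℕ} (v : Fin r → ℕ) (B : Fin r → Finset (Finset ℕ)) :
    Finset (Finset ℕ) :=
  univ.biUnion fun i => (B i).image (insert (v i))

section LiftUnion

variable {V : Finset ℕ} {j r : ℕ} {v : Fin r → ℕ} {B : Fin r → Finset (Finset ℕ)}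

theorem apply_notMem_sdiff_image (i : Fin r) : v i ∉ V \ image v univ :=
  fun h => (mem_sdiff.1 h).2 (mem_image_of_mem v (mem_univ i))

theorem isInfected_insert_liftUnion (hv : Injective v) (hvV : ∀ i, v i ∈ V)
    (hB : ∀ i, Percolates (V \ image v univ) (j + 1) j (i.val + 1) (B i)) (i : Fin r)
    {J : Finset ℕ} (hJ : J ∈ (V \ image v univ).powersetCard j) :
    IsInfected V (V.powersetCard (j + 2)) (j + 1) r (liftUnion v B) (insert (v i) J) := by
  induction i using WellFoundedGT.induction generalizing J with
  | _ i ih =>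
  obtain ⟨e, he⟩ : ∃ e, i + 1 + e = r := ⟨r - (i + 1), by omega⟩
  refine isInfected_insert_of_percolates (u := fun l => v ⟨i + 1 + l, by omega⟩) he
    (insert_subset (hvV i) sdiff_subset) (apply_notMem_sdiff_image i)
    (fun l l' h => Fin.ext (by simpa using hv h))
    (fun l => mem_sdiff.2 ⟨hvV _, ?_⟩) (fun J hJ => ⟨0, ?_⟩)
    (fun l J hJ => ih _ (Fin.lt_def.2 (by dsimp only; omega)) hJ) (hB i) hJ
  · rw [mem_insert, not_or]
    exact ⟨fun h => by have := Fin.ext_iff.1 (hv h); dsimp only at this; omega,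
      apply_notMem_sdiff_image _⟩
  · exact mem_biUnion.2 ⟨i, mem_univ i, mem_image_of_mem _ hJ⟩

theorem isInfected_liftUnion_of_card_inter_eq_succ (hn : 2 * r + j + 1 ≤ V.card)
    (hv : Injective v) (hvV : ∀ i, v i ∈ V)
    (hB : ∀ i, Percolates (V \ image v univ) (j + 1) j (i.val + 1) (B i)) (m : ℕ)
    {J : Finset ℕ} (hJ : J ∈ V.powersetCard (j + 1)) (hm : (J ∩ image v univ).card = m + 1) :
    IsInfected V (V.powersetCard (j + 2)) (j + 1) r (liftUnion v B) J := by
  obtain ⟨hJV, hJcard⟩ := mem_powersetCard.1 hJ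
  induction m generalizing J with
  | zero =>
    obtain ⟨x, hx⟩ := card_eq_one.1 hm
    obtain ⟨hxJ, hxR⟩ := mem_inter.1 (hx ▸ mem_singleton_self x)
    obtain ⟨i, -, rfl⟩ := mem_image.1 hxR
    have hJi : J.erase (v i) ∈ (V \ image v univ).powersetCard j := by
      refine mem_powersetCard.2 ⟨fun y hy => mem_sdiff.2 ⟨hJV (mem_of_mem_erase hy),
        fun hyR => ne_of_mem_erase hy ?_⟩,
        by rw [card_erase_of_mem hxJ, hJcard, Nat.add_sub_cancel]⟩
      simpa [hx] using mem_inter.2 ⟨mem_of_mem_erase hy, hyR⟩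
    rw [← insert_erase hxJ]
    exact isInfected_insert_liftUnion hv hvV hB i hJi
  | succ m ih =>
    obtain ⟨x, hx⟩ : (J ∩ image v univ).Nonempty := card_pos.1 (by omega)
    obtain ⟨w, hw, hwV⟩ :=
      exists_injective_fin_of_le_card (s := (V \ image v univ) \ J) (r := r) (by
        have := le_card_sdiff J (V \ image v univ)
        rw [card_sdiff_of_subset (image_subset_iff.2 fun i _ => hvV i),
          card_image_of_injective _ hv, card_univ, Fintype.card_fin] at this
        omega)
    have hwW l : w l ∈ V ∧ w l ∉ image v univ := Finset.mem_sdiff.1 (mem_sdiff.1 (hwV l)).1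
    have hwJ l : w l ∉ J.erase x := fun h => (mem_sdiff.1 (hwV l)).2 (mem_of_mem_erase h)
    refine .of_insert_erase hJ x hw (fun l => mem_sdiff.2
      ⟨(hwW l).1, (mem_sdiff.1 (hwV l)).2⟩) fun l => ih ?_ ?_ ?_ ?_
    · exact insert_mem_powersetCard (hwW l).1 (hwJ l)
        (mem_powersetCard.2 ⟨(erase_subset x J).trans hJV, by
          rw [card_erase_of_mem (mem_inter.1 hx).1, hJcard, Nat.add_sub_cancel]⟩)
    · rw [insert_inter_of_notMem (hwW l).2, erase_inter, card_erase_of_mem hx, hm,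
        Nat.add_sub_cancel]
    · exact insert_subset (hwW l).1 ((erase_subset x J).trans hJV)
    · rw [card_insert_of_notMem (hwJ l), card_erase_of_mem (mem_inter.1 hx).1, hJcard,
        Nat.add_sub_cancel]

theorem liftUnion_percolates (hn : 2 * r + j + 1 ≤ V.card) (hv : Injective v)
    (hvV : ∀ i, v i ∈ V)
    (hB : ∀ i, Percolates (V \ image v univ) (j + 1) j (i.val + 1) (B i)) :
    Percolates V (j + 2) (j + 1) r (liftUnion v B) := by
  refine percolates_of_forall_isInfected (fun J hJ => ?_) fun J hJ => ?_
  · obtain ⟨i, -, hJ⟩ := mem_biUnion.1 hJ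
    obtain ⟨b, hb, rfl⟩ := mem_image.1 hJ
    have hbW := (hB i).subset_powersetCard hb
    exact insert_mem_powersetCard (hvV i)
      (fun h => apply_notMem_sdiff_image i ((mem_powersetCard.1 hbW).1 h))
      (powersetCard_mono sdiff_subset hbW)
  obtain hm | hm := Nat.eq_zero_or_pos (J ∩ image v univ).card
  · obtain ⟨hJV, hJcard⟩ := mem_powersetCard.1 hJ
    have hJW : J ⊆ V \ image v univ :=
      subset_sdiff.2 ⟨hJV, disjoint_iff_inter_eq_empty.2 (card_eq_zero.1 hm)⟩
    obtain ⟨x, hx⟩ := card_pos.1 (by omega : 0 < J.card)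
    refine .of_insert_erase hJ x hv
      (fun l => mem_sdiff.2 ⟨hvV l, fun h => apply_notMem_sdiff_image l (hJW h)⟩)
      fun l => isInfected_insert_liftUnion hv hvV hB l (mem_powersetCard.2
        ⟨(erase_subset x J).trans hJW,
          by rw [card_erase_of_mem hx, hJcard, Nat.add_sub_cancel]⟩)
  · exact isInfected_liftUnion_of_card_inter_eq_succ hn hv hvV hB _ hJ
      (Nat.succ_pred_eq_of_pos hm).symm

end LiftUnion

theorem eventually_ellMin_le_sum {j : ℕ} (hj : 1 ≤ j) (r : ℕ) :
    ∀ᶠ n in atTop,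
      ellMin n (j + 2) (j + 1) r ≤ ∑ i ∈ range r, ellMin n (j + 1) j (i + 1) := by
  choose L hL using exists_eventually_ellMin_eq hj
  have hconst : ∀ᶠ n in atTop, ∀ i ∈ range r, ellMin n (j + 1) j (i + 1) = L (i + 1) :=
    (eventually_all_finset _).2 fun i _ => hL (i + 1)
  filter_upwards [hconst, (tendsto_sub_atTop_nat r).eventually hconst,
    eventually_ge_atTop (2 * r + j + 1)] with n hn hnr hlarge
  set v : Fin r → ℕ := fun i => n - r + i
  have hv : Injective v := fun a b hab => Fin.ext (by simpa [v] using hab)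
  have hW : range n \ image v univ = range (n - r) := by
    ext x
    simp only [Finset.mem_sdiff, mem_range, Finset.mem_image, mem_univ, true_and, v]
    constructor
    · rintro ⟨hx, hxv⟩
      by_contra hxr
      exact hxv ⟨⟨x - (n - r), by omega⟩, by simp only; omega⟩
    · rintro hx
      exact ⟨by omega, fun ⟨i, hi⟩ => by omega⟩
  choose C hCcard hC using
    fun i : Fin r => exists_percolates_card_eq_ellMin (n - r) (j + 1) j (i + 1)
  have hperc := liftUnion_percolates (V := range n) (B := C) (by simpa using hlarge) hv
    (fun i => mem_range.2 (by simp only [v]; omega)) (fun i => hW ▸ hC i)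
  calc ellMin n (j + 2) (j + 1) r
      ≤ (liftUnion v C).card := ellMin_le_card hperc
    _ ≤ ∑ i, ((C i).image (insert (v i))).card := card_biUnion_le
    _ ≤ ∑ i, (C i).card := sum_le_sum fun i _ => card_image_le
    _ = ∑ i ∈ range r, ellMin n (j + 1) j (i + 1) := by
      rw [← Fin.sum_univ_eq_sum_range]
      refine sum_congr rfl fun i _ => ?_
      rw [hCcard, hnr i (mem_range.2 i.2), hn i (mem_range.2 i.2)]

theorem stmt18_general (k r : ℕ) (hk : 4 ≤ k) :
    ∃ n0, ∀ n ≥ n0,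
      (∀ v : Fin r → ℕ, Function.Injective v → (∀ i, v i ∈ range n) →
        ∀ B : Fin r → Finset (Finset ℕ),
        (∀ i, B i ⊆ (range n \ Finset.image v Finset.univ).powersetCard (k - 2)) →
        (∀ i, Percolates (range n \ Finset.image v Finset.univ) (k - 1) (k - 2)
          (i.val + 1) (B i)) →
        Percolates (range n) k (k - 1) r
          (Finset.univ.biUnion (fun i => (B i).image (insert (v i))))) ∧
      ellMin n k (k - 1) r ≤ ∑ i ∈ Finset.range r, ellMin n (k - 1) (k - 2) (i + 1) := by
  obtain ⟨j, rfl⟩ : ∃ j, k = j + 2 := ⟨k - 2, by omega⟩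
  simp only [Nat.add_sub_cancel, show j + 2 - 1 = j + 1 by omega]
  rw [← eventually_atTop]
  filter_upwards [eventually_ge_atTop (2 * r + j + 1),
    eventually_ellMin_le_sum (j := j) (by omega) r]
    with n hn hsum
  exact ⟨fun v hv hvn B _ hB => liftUnion_percolates (by simpa using hn) hv hvn hB, hsum⟩

theorem stmt18 (k r : ℕ) (hk : 4 ≤ k) (hr : 1 ≤ r) :
    ∃ n0, ∀ n ≥ n0,
      (∀ v : Fin r → ℕ, Function.Injective v → (∀ i, v i ∈ range n) →
        ∀ B : Fin r → Finset (Finset ℕ),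
        (∀ i, B i ⊆ (range n \ Finset.image v Finset.univ).powersetCard (k - 2)) →
        (∀ i, Percolates (range n \ Finset.image v Finset.univ) (k - 1) (k - 2)
          (i.val + 1) (B i)) →
        Percolates (range n) k (k - 1) r
          (Finset.univ.biUnion (fun i => (B i).image (insert (v i))))) ∧
      ellMin n k (k - 1) r ≤ ∑ i ∈ Finset.range r, ellMin n (k - 1) (k - 2) (i + 1) :=
  stmt18_general k r hk
end
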